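/- arXiv:1202.6263 — 2 statements merged into one kernel-verified Lean document; each statement's English description precedes it below -/
import Mathlib

section
/- Let p̃ be a probability mass function on ℕ with finite support. There exists a unique p̂ ∈ 𝒦 with ∑_{i≥0} p̂(i)² < ∞ such that Q(p̂) ≤ Q(f) for every f ∈ 𝒦 with ∑_{i≥0} f(i)² < ∞. Moreover, this minimizer p̂ has finite support. -/
open scoped BigOperators

noncomputable section

/-- A discrete function `f : ℕ → ℝ` is convex if
`f(i+1) - 2 f(i) + f(i-1) ≥ 0` for every `i ≥ 1`. -/
def ConvexNat (f : ℕ → ℝ) : Prop :=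
  ∀ i : ℕ, 0 ≤ f (i + 2) - 2 * f (i + 1) + f i

/-- `𝒦`: convex, nonnegative functions on `ℕ` tending to `0` at infinity. -/
def MemK (f : ℕ → ℝ) : Prop :=
  ConvexNat f ∧ (∀ i, 0 ≤ f i) ∧ Filter.Tendsto f Filter.atTop (nhds 0)

/-- `𝒞`: elements of `𝒦` summing to one. -/
def MemC (f : ℕ → ℝ) : Prop := MemK f ∧ ∑' i, f i = 1

/-- The least squares criterion `Q(f) = (1/2) ∑ f(i)² − ∑ f(i) p̃(i)`. -/
def Crit (ptil f : ℕ → ℝ) : ℝ :=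
  (1 / 2) * ∑' i, (f i) ^ 2 - ∑' i, f i * ptil i

/-- A probability mass function on `ℕ` with finite support. -/
def IsFinPMF (p : ℕ → ℝ) : Prop :=
  (∀ i, 0 ≤ p i) ∧ (Function.support p).Finite ∧ ∑' i, p i = 1

/-- `s` is the maximum of the support of `p`. -/
def IsMaxSupport (p : ℕ → ℝ) (s : ℕ) : Prop :=
  p s ≠ 0 ∧ ∀ i, p i ≠ 0 → i ≤ s

/-!
The criterion is `Q(f) = ‖p̃ - f‖² / 2 - ‖p̃‖² / 2` in `ℓ²`, so its minimizers over `𝒦 ∩ ℓ²` are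
the nearest points to `p̃` of a closed convex subset of `ℓ²`: one exists and is unique by the
Hilbert projection theorem, and it is characterized by the variational inequality
`⟪p̃ - p̂, w - p̂⟫ ≤ 0`. Testing it against `w = p̂ ± ε T_k` with the tents
`T_k(i) = (k - i)₊` gives `D(k) := ∑_{i<k} (p̂ - p̃)(i) (k - i) ≥ 0`, with equality at every knot
`k - 1` of `p̂` (a point where its second difference is positive) as long as `p̂(k - 1) > 0`.
If `p̂` had infinite support it would be positive everywhere with infinitely many knots; but beyond
the support of `p̃` the function `D` is strictly convex, so once `D` vanishes there it stays
positive from two steps on.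
-/

open Filter Topology Finset Function
open scoped lp InnerProductSpace

lemma memℓp_two_iff_summable_sq {ι : Type*} {f : ι → ℝ} :
    Memℓp f 2 ↔ Summable fun i => f i ^ 2 := by
  rw [memℓp_gen_iff (by norm_num)]
  simp

lemma memℓp_of_support_finite {ι : Type*} {f : ι → ℝ} (hf : (support f).Finite)
    (p : ENNReal) : Memℓp f p :=
  (memℓp_zero hf).of_exponent_ge zero_le

lemma lp.tsum_sq_eq_norm_sq {ι : Type*} (F : ℓ²(ι, ℝ)) : ∑' i, F i ^ 2 = ‖F‖ ^ 2 := by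
  rw [← real_inner_self_eq_norm_sq, lp.inner_eq_tsum]
  simp [sq]

lemma lp.tsum_mul_eq_inner {ι : Type*} (F G : ℓ²(ι, ℝ)) : ∑' i, F i * G i = ⟪F, G⟫_ℝ := by
  rw [lp.inner_eq_tsum]
  simp [mul_comm]

lemma tendsto_zero_of_summable_sq {f : ℕ → ℝ} (hf : Summable fun i => f i ^ 2) :
    Tendsto f atTop (𝓝 0) := by
  rw [tendsto_zero_iff_abs_tendsto_zero]
  simpa [Function.comp_def, Real.sqrt_sq_eq_abs] using hf.tendsto_atTop_zero.sqrt

lemma tendsto_slope_of_tendsto {f : ℕ → ℝ} {a : ℝ} (hf : Tendsto f atTop (𝓝 a)) :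
    Tendsto (fun n => f (n + 1) - f n) atTop (𝓝 0) := by
  simpa using (hf.comp (tendsto_add_atTop_nat 1)).sub hf

lemma ConvexNat.monotone_slope {f : ℕ → ℝ} (hf : ConvexNat f) :
    Monotone fun n => f (n + 1) - f n :=
  monotone_nat_of_le_succ fun n => by linarith [hf n]

namespace MemK

variable {f : ℕ → ℝ} (hf : MemK f)
include hf

lemma antitone : Antitone f :=
  antitone_nat_of_succ_le fun n =>
    sub_nonpos.1 (hf.1.monotone_slope.ge_of_tendsto (tendsto_slope_of_tendsto hf.2.2) n)

lemma pos_of_support_infinite (h : (support f).Infinite) (i : ℕ) : 0 < f i := by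
  refine (hf.2.1 i).lt_of_ne' fun hfi => h ((Set.finite_Iio i).subset fun j hj => ?_)
  by_contra hji
  exact hj (le_antisymm (hfi ▸ hf.antitone (not_lt.1 hji)) (hf.2.1 j))

lemma exists_knot_ge (h : (support f).Infinite) (N : ℕ) :
    ∃ m, N ≤ m ∧ 0 < f (m + 2) - 2 * f (m + 1) + f m := by
  by_contra! hflat
  have hslope : ∀ n, N ≤ n → f (n + 1) - f n = f (N + 1) - f N := by
    intro n hn
    induction n, hn using Nat.le_induction with
    | base => rfl
    | succ n hn ih => linarith [hflat n hn, hf.1 n]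
  have hslope0 : f (N + 1) - f N = 0 :=
    tendsto_nhds_unique (tendsto_const_nhds.congr' (eventually_atTop.2 ⟨N, fun n hn =>
      (hslope n hn).symm⟩)) (tendsto_slope_of_tendsto hf.2.2)
  have hconst : ∀ n, N ≤ n → f n = f N := by
    intro n hn
    induction n, hn using Nat.le_induction with
    | base => rfl
    | succ n hn ih => linarith [hslope n hn]
  exact (hf.pos_of_support_infinite h N).ne' <| tendsto_nhds_unique
    (tendsto_const_nhds.congr' (eventually_atTop.2 ⟨N, fun n hn => (hconst n hn).symm⟩)) hf.2.2

end MemK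

def nonnegConvex : Set (ℕ → ℝ) := {f | ConvexNat f ∧ ∀ i, 0 ≤ f i}

lemma zero_mem_nonnegConvex : (0 : ℕ → ℝ) ∈ nonnegConvex :=
  ⟨fun i => by simp, fun i => le_rfl⟩

lemma convex_nonnegConvex : Convex ℝ nonnegConvex := by
  rintro f ⟨hfc, hf0⟩ g ⟨hgc, hg0⟩ a b ha hb -
  refine ⟨fun i => ?_, fun i => ?_⟩ <;> simp only [Pi.add_apply, Pi.smul_apply, smul_eq_mul]
  · linear_combination mul_nonneg ha (hfc i) + mul_nonneg hb (hgc i)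
  · exact add_nonneg (mul_nonneg ha (hf0 i)) (mul_nonneg hb (hg0 i))

lemma isClosed_nonnegConvex : IsClosed nonnegConvex := by
  simp only [nonnegConvex, ConvexNat, Set.ofPred_and, Set.ofPred_forall]
  exact (isClosed_iInter fun i => isClosed_le continuous_const (by fun_prop)).inter
    (isClosed_iInter fun i => isClosed_le continuous_const (continuous_apply i))

lemma memK_of_mem_nonnegConvex (F : ℓ²(ℕ, ℝ)) (hF : ⇑F ∈ nonnegConvex) : MemK F :=
  ⟨hF.1, hF.2, tendsto_zero_of_summable_sq (memℓp_two_iff_summable_sq.1 F.2)⟩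

def tent (k i : ℕ) : ℝ := (k - i : ℕ)

lemma tent_nonneg (k i : ℕ) : 0 ≤ tent k i := Nat.cast_nonneg _

lemma tent_le (k i : ℕ) : tent k i ≤ k := by
  unfold tent
  exact_mod_cast Nat.sub_le k i

lemma tent_eq_zero {k i : ℕ} (h : k ≤ i) : tent k i = 0 := by
  simp [tent, Nat.sub_eq_zero_of_le h]

lemma tent_succ {k i : ℕ} (h : i ≤ k) : tent (k + 1) i = tent k i + 1 := by
  simp [tent, Nat.succ_sub h]

lemma tent_secondDiff (k i : ℕ) :
    tent k (i + 2) - 2 * tent k (i + 1) + tent k i = if i + 1 = k then 1 else 0 := by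
  unfold tent
  split_ifs with h
  · subst h
    simp
  · rcases le_or_gt k i with hk | hk
    · simp [Nat.sub_eq_zero_of_le, hk, show k ≤ i + 1 by omega, show k ≤ i + 2 by omega]
    · rw [Nat.cast_sub (by omega), Nat.cast_sub (by omega), Nat.cast_sub (by omega)]
      push_cast
      ring

lemma add_tent_mem_nonnegConvex {f : ℕ → ℝ} (hf : f ∈ nonnegConvex) (k : ℕ) :
    f + tent k ∈ nonnegConvex := by
  refine ⟨fun i => ?_, fun i => add_nonneg (hf.2 i) (tent_nonneg k i)⟩
  have h := tent_secondDiff k i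
  simp only [Pi.add_apply]
  split_ifs at h <;> linarith [hf.1 i]

lemma MemK.exists_sub_smul_tent_mem {f : ℕ → ℝ} (hf : MemK f) {m : ℕ} (hm : 0 < f m)
    (hknot : 0 < f (m + 2) - 2 * f (m + 1) + f m) :
    ∃ ε : ℝ, 0 < ε ∧ f - ε • tent (m + 1) ∈ nonnegConvex := by
  set ε := min (f (m + 2) - 2 * f (m + 1) + f m) (f m / (m + 1))
  refine ⟨ε, lt_min hknot (by positivity), fun i => ?_, fun j => ?_⟩ <;>
    simp only [Pi.sub_apply, Pi.smul_apply, smul_eq_mul]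
  · have h := tent_secondDiff (m + 1) i
    have hε : ε ≤ f (m + 2) - 2 * f (m + 1) + f m := min_le_left _ _
    split_ifs at h with hi
    · obtain rfl : i = m := by omega
      linear_combination hε + ε * h
    · linear_combination hf.1 i + ε * h
  · rcases le_or_gt (m + 1) j with hj | hj
    · simpa [tent_eq_zero hj] using hf.2.1 j
    · have hε : ε * tent (m + 1) j ≤ f m / (m + 1) * (m + 1) :=
        mul_le_mul (min_le_right _ _) (by exact_mod_cast tent_le (m + 1) j) (tent_nonneg _ _)
          (by positivity)
      rw [div_mul_cancel₀ _ (by positivity)] at hε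
      linarith [hf.antitone (Nat.lt_succ_iff.1 hj)]

def tentPairing (g : ℕ → ℝ) (k : ℕ) : ℝ := ∑ i ∈ range k, g i * tent k i

lemma tentPairing_succ (g : ℕ → ℝ) (k : ℕ) :
    tentPairing g (k + 1) = tentPairing g k + ∑ i ∈ range (k + 1), g i := by
  calc tentPairing g (k + 1) = ∑ i ∈ range (k + 1), (g i * tent k i + g i) :=
        sum_congr rfl fun i hi => by rw [tent_succ (mem_range_succ_iff.1 hi)]; ring
    _ = _ := by
      rw [sum_add_distrib, sum_range_succ (fun i => g i * tent k i), tent_eq_zero le_rfl,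
        mul_zero, add_zero, tentPairing]

/-- The increments of `tentPairing g` are the partial sums of `g`, which increase past `s`. -/
lemma tentPairing_pos {g : ℕ → ℝ} {s k n : ℕ} (hg : ∀ i, s < i → 0 < g i)
    (hnonneg : ∀ k, 0 ≤ tentPairing g k) (hk : s ≤ k) (hzero : tentPairing g k = 0)
    (hn : k + 1 < n) : 0 < tentPairing g n := by
  have hsum : ∀ j, k < j → 0 < ∑ i ∈ range (j + 1), g i := by
    have hk' : 0 ≤ ∑ i ∈ range (k + 1), g i := by
      linarith [hnonneg (k + 1), tentPairing_succ g k]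
    intro j hj
    induction j, hj using Nat.le_induction with
    | base => rw [sum_range_succ]; linarith [hg (k + 1) (by omega)]
    | succ j hj ih => rw [sum_range_succ]; linarith [hg (j + 1) (by omega)]
  induction n, hn using Nat.le_induction with
  | base => rw [tentPairing_succ]; linarith [hnonneg (k + 1), hsum (k + 1) (by omega)]
  | succ n hn ih => rw [tentPairing_succ]; linarith [hsum n (by omega)]

def lpTent (k : ℕ) : ℓ²(ℕ, ℝ) :=
  ⟨tent k, memℓp_of_support_finite ((Set.finite_Iio k).subset fun _ hi =>
    not_le.1 fun hki => hi (tent_eq_zero hki)) 2⟩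

lemma inner_lpTent (G : ℓ²(ℕ, ℝ)) (k : ℕ) : ⟪G, lpTent k⟫_ℝ = tentPairing G k := by
  rw [← lp.tsum_mul_eq_inner]
  exact tsum_eq_sum fun i hi => by
    simp [lpTent, tent_eq_zero (not_lt.1 (mem_range.not.1 hi))]

section Variational

variable {u v : ℓ²(ℕ, ℝ)} (hv : ⇑v ∈ nonnegConvex)
  (hvar : ∀ w : ℓ²(ℕ, ℝ), ⇑w ∈ nonnegConvex → ⟪u - v, w - v⟫_ℝ ≤ 0)
include hv hvar

lemma tentPairing_sub_nonneg (k : ℕ) : 0 ≤ tentPairing (⇑v - ⇑u) k := by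
  have h := hvar (v + lpTent k) (by rw [lp.coeFn_add]; exact add_tent_mem_nonnegConvex hv k)
  rw [add_sub_cancel_left, ← neg_sub, inner_neg_left, inner_lpTent, lp.coeFn_sub] at h
  linarith

lemma tentPairing_sub_eq_zero_of_knot {m : ℕ} (hm : 0 < v m)
    (hknot : 0 < v (m + 2) - 2 * v (m + 1) + v m) : tentPairing (⇑v - ⇑u) (m + 1) = 0 := by
  obtain ⟨ε, hε, hmem⟩ :=
    (memK_of_mem_nonnegConvex v hv).exists_sub_smul_tent_mem hm hknot
  have h := hvar (v - ε • lpTent (m + 1)) (by rwa [lp.coeFn_sub, lp.coeFn_smul])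
  rw [sub_sub_cancel_left, inner_neg_right, ← neg_sub, inner_neg_left, neg_neg,
    real_inner_smul_right, inner_lpTent, lp.coeFn_sub] at h
  exact le_antisymm (nonpos_of_mul_nonpos_right h hε) (tentPairing_sub_nonneg hv hvar _)

lemma support_finite_of_variational {s : ℕ} (hu : ∀ i, s < i → u i = 0) :
    (support v).Finite := by
  by_contra h
  have hvK := memK_of_mem_nonnegConvex v hv
  have hpos := hvK.pos_of_support_infinite h
  obtain ⟨m₁, hm₁, hknot₁⟩ := hvK.exists_knot_ge h s
  obtain ⟨m₂, hm₂, hknot₂⟩ := hvK.exists_knot_ge h (m₁ + 2)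
  have hzero₁ := tentPairing_sub_eq_zero_of_knot hv hvar (hpos m₁) hknot₁
  have hzero₂ := tentPairing_sub_eq_zero_of_knot hv hvar (hpos m₂) hknot₂
  have hg : ∀ i, s < i → 0 < (⇑v - ⇑u) i := fun i hi => by simp [hu i hi, hpos i]
  exact (tentPairing_pos (n := m₂ + 1) hg (tentPairing_sub_nonneg hv hvar) (by omega) hzero₁
    (by omega)).ne' hzero₂

end Variational

section Projection

variable {E : Type*} [SeminormedAddCommGroup E] {K : Set E} {u v : E}

lemma bddBelow_range_norm_sub (u : E) (K : Set E) : BddBelow (Set.range fun w : K => ‖u - w‖) :=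
  ⟨0, Set.forall_mem_range.2 fun _ => norm_nonneg _⟩

lemma norm_sub_eq_iInf_of_forall_le (hv : v ∈ K) (hmin : ∀ w ∈ K, ‖u - v‖ ≤ ‖u - w‖) :
    ‖u - v‖ = ⨅ w : K, ‖u - w‖ :=
  have : Nonempty K := ⟨⟨v, hv⟩⟩
  le_antisymm (le_ciInf fun w => hmin w w.2) (ciInf_le (bddBelow_range_norm_sub u K) ⟨v, hv⟩)

end Projection

section InnerProductProjection

variable {E : Type*} [NormedAddCommGroup E] [InnerProductSpace ℝ E] {K : Set E} {u v : E}

lemma real_inner_le_zero_of_forall_norm_sub_le (hK : Convex ℝ K) (hv : v ∈ K)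
    (hmin : ∀ w ∈ K, ‖u - v‖ ≤ ‖u - w‖) : ∀ w ∈ K, ⟪u - v, w - v⟫_ℝ ≤ 0 :=
  (norm_eq_iInf_iff_real_inner_le_zero hK hv).1 (norm_sub_eq_iInf_of_forall_le hv hmin)

theorem existsUnique_forall_norm_sub_le (hne : K.Nonempty) (hc : IsComplete K)
    (hK : Convex ℝ K) (u : E) : ∃! v, v ∈ K ∧ ∀ w ∈ K, ‖u - v‖ ≤ ‖u - w‖ := by
  obtain ⟨v, hv, hvinf⟩ := exists_norm_eq_iInf_of_complete_convex hne hc hK u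
  have hvmin : ∀ w ∈ K, ‖u - v‖ ≤ ‖u - w‖ := fun w hw =>
    hvinf ▸ ciInf_le (bddBelow_range_norm_sub u K) ⟨w, hw⟩
  refine ⟨v, ⟨hv, hvmin⟩, fun w ⟨hw, hwmin⟩ => ?_⟩
  have h₁ := real_inner_le_zero_of_forall_norm_sub_le hK hv hvmin w hw
  have h₂ := real_inner_le_zero_of_forall_norm_sub_le hK hw hwmin v hv
  have h : ⟪w - v, w - v⟫_ℝ = ⟪u - v, w - v⟫_ℝ + ⟪u - w, v - w⟫_ℝ := by
    rw [← neg_sub w v, inner_neg_right, ← sub_eq_add_neg, ← inner_sub_left,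
      sub_sub_sub_cancel_left]
  exact sub_eq_zero.1 (real_inner_self_nonpos.1 (h ▸ add_nonpos h₁ h₂))

end InnerProductProjection

lemma crit_eq (p F : ℓ²(ℕ, ℝ)) : Crit p F = ‖p - F‖ ^ 2 / 2 - ‖p‖ ^ 2 / 2 := by
  rw [Crit, lp.tsum_sq_eq_norm_sq, lp.tsum_mul_eq_inner, norm_sub_sq_real, real_inner_comm]
  ring

lemma crit_le_crit_iff (p F G : ℓ²(ℕ, ℝ)) : Crit p F ≤ Crit p G ↔ ‖p - F‖ ≤ ‖p - G‖ := by
  rw [crit_eq, crit_eq, sub_le_sub_iff_right, div_le_div_iff_of_pos_right two_pos,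
    sq_le_sq₀ (norm_nonneg _) (norm_nonneg _)]

/-- Lemma 1: there is a unique square-summable minimizer of `Q` over `𝒦`,
and it has finite support. -/
theorem stmt_1 (ptil : ℕ → ℝ) (hptil : IsFinPMF ptil) :
    ∃! phat : ℕ → ℝ,
      MemK phat ∧
      Summable (fun i => (phat i) ^ 2) ∧
      (∀ f : ℕ → ℝ, MemK f → Summable (fun i => (f i) ^ 2) →
        Crit ptil phat ≤ Crit ptil f) ∧
      (Function.support phat).Finite := by
  obtain ⟨s, hs⟩ := hptil.2.1.bddAbove
  have hptil_zero : ∀ i, s < i → ptil i = 0 := fun i hi =>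
    notMem_support.1 fun h => hi.not_ge (hs h)
  set u : ℓ²(ℕ, ℝ) := ⟨ptil, memℓp_of_support_finite hptil.2.1 2⟩
  set K := {F : ℓ²(ℕ, ℝ) | ⇑F ∈ nonnegConvex}
  have hK : Convex ℝ K := convex_nonnegConvex.is_linear_preimage ⟨lp.coeFn_add, lp.coeFn_smul⟩
  have hKc : IsComplete K :=
    (isClosed_nonnegConvex.preimage lp.uniformContinuous_coe.continuous).isComplete
  have hK₀ : (0 : ℓ²(ℕ, ℝ)) ∈ K :=
    show ⇑(0 : ℓ²(ℕ, ℝ)) ∈ nonnegConvex by rw [lp.coeFn_zero]; exact zero_mem_nonnegConvex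
  obtain ⟨v, ⟨hvK, hvmin⟩, huniq⟩ := existsUnique_forall_norm_sub_le ⟨0, hK₀⟩ hKc hK u
  have hvar := real_inner_le_zero_of_forall_norm_sub_le hK hvK hvmin
  refine ⟨v, ⟨memK_of_mem_nonnegConvex v hvK, memℓp_two_iff_summable_sq.1 v.2,
    fun f hf hf₂ => (crit_le_crit_iff u v ⟨f, memℓp_two_iff_summable_sq.2 hf₂⟩).2
      (hvmin _ ⟨hf.1, hf.2.1⟩),
    support_finite_of_variational hvK hvar hptil_zero⟩, ?_⟩
  rintro q ⟨hq, hq₂, hqmin, -⟩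
  have hqv := huniq ⟨q, memℓp_two_iff_summable_sq.2 hq₂⟩ ⟨⟨hq.1, hq.2.1⟩, fun w hw =>
    (crit_le_crit_iff u _ w).1 (hqmin w (memK_of_mem_nonnegConvex w hw)
      (memℓp_two_iff_summable_sq.1 w.2))⟩
  exact congrArg (⇑) hqv
end
end

section
/- Let f : ℕ → [0,∞) satisfy lim_{i→∞} f(i) = 0. Then f ∈ 𝒦 if and only if there exists a sequence (π_j)_{j≥1} of nonnegative reals such that for every i ≥ 0 the series ∑_{j≥i+1} π_j T_j(i) converges and f(i) = ∑_{j≥i+1} π_j T_j(i). -/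
open scoped BigOperators

noncomputable section

/-- The triangular function `T_j(i) = 2(j−i)/(j(j+1))` for `i < j`, `0` otherwise. -/
def Tri (j i : ℕ) : ℝ :=
  if i < j then 2 * ((j : ℝ) - (i : ℝ)) / ((j : ℝ) * ((j : ℝ) + 1)) else 0

/-! A triangle `T_j` is affine on `[0, j]` and on `[j, ∞)`, and its second difference at the
kink `j` is `2 / (j (j + 1))`. So a mixture of triangles is convex, and conversely a convex `f`
is the mixture with weights `π_j = binom(j + 1, 2) (f (j + 1) - 2 f j + f (j - 1))`: the identity
`f i = ∑ₙ (n + 1) secondDiff f (i + n)` is Abel summation, whose boundary term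
`n (f n - f (n + 1))` tends to `0` because the first differences of `f` decrease to `0`. -/

open Filter Finset Topology

def secondDiff (f : ℕ → ℝ) (i : ℕ) : ℝ :=
  f (i + 2) - 2 * f (i + 1) + f i

def triWeight (f : ℕ → ℝ) : ℕ → ℝ
  | 0 => 0
  | k + 1 => ((k : ℝ) + 1) * ((k : ℝ) + 2) / 2 * secondDiff f k

lemma sum_range_mul_secondDiff (f : ℕ → ℝ) (M : ℕ) :
    ∑ n ∈ range M, ((n : ℝ) + 1) * secondDiff f n = f 0 - f M - M * (f M - f (M + 1)) := by
  induction M with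
  | zero => simp
  | succ M ih =>
    rw [sum_range_succ, ih, secondDiff]
    push_cast
    ring

namespace ConvexNat

variable {f : ℕ → ℝ}

lemma secondDiff_nonneg (hf : ConvexNat f) (i : ℕ) : 0 ≤ secondDiff f i := hf i

lemma comp_add_left (hf : ConvexNat f) (i : ℕ) : ConvexNat fun n => f (i + n) :=
  fun n => hf (i + n)

lemma const_mul (hf : ConvexNat f) {c : ℝ} (hc : 0 ≤ c) : ConvexNat fun i => c * f i := by
  intro i
  have := mul_nonneg hc (hf i)
  linarith

lemma tsum {F : ℕ → ℕ → ℝ} (hF : ∀ j, ConvexNat (F j)) (hs : ∀ i, Summable fun j => F j i) :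
    ConvexNat fun i => ∑' j, F j i := by
  intro i
  have h : ∑' j, F j (i + 2) - 2 * ∑' j, F j (i + 1) + ∑' j, F j i
      = ∑' j, (F j (i + 2) - 2 * F j (i + 1) + F j i) := by
    rw [((hs _).sub ((hs _).mul_left 2)).tsum_add (hs i), (hs _).tsum_sub ((hs _).mul_left 2),
      tsum_mul_left]
  exact h ▸ tsum_nonneg fun j => hF j i

lemma antitone_sub_succ (hf : ConvexNat f) : Antitone fun n => f n - f (n + 1) :=
  antitone_nat_of_succ_le fun n => by linarith [hf n]

/-- The first differences decrease to `0`, and the `N - N/2` of them from `N/2` to `N`, all at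
least the `N`-th one, add up to `f (N/2) - f N`. -/
lemma tendsto_mul_sub_succ (hf : ConvexNat f) (hlim : Tendsto f atTop (𝓝 0)) :
    Tendsto (fun n : ℕ => (n : ℝ) * (f n - f (n + 1))) atTop (𝓝 0) := by
  set g := fun n => f n - f (n + 1)
  have hg_nonneg : ∀ n, 0 ≤ g n := hf.antitone_sub_succ.le_of_tendsto <| by
    simpa using hlim.sub (hlim.comp (tendsto_add_atTop_nat 1))
  have hbound : ∀ N : ℕ, (N : ℝ) * g N ≤ 2 * (f (N / 2) - f N) := by
    intro N
    have hcard : (N - N / 2) • g N ≤ ∑ k ∈ range (N - N / 2), g (N / 2 + k) := by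
      simpa using card_nsmul_le_sum (range (N - N / 2)) (fun k => g (N / 2 + k)) (g N)
        fun k hk => hf.antitone_sub_succ (by simp at hk; omega)
    have htele : ∑ k ∈ range (N - N / 2), g (N / 2 + k) = f (N / 2) - f N := by
      have h := sum_range_sub' (fun k => f (N / 2 + k)) (N - N / 2)
      rwa [add_zero, show N / 2 + (N - N / 2) = N by omega] at h
    have hN : (N : ℝ) ≤ 2 * ((N - N / 2 : ℕ) : ℝ) := by
      exact_mod_cast (by omega : N ≤ 2 * (N - N / 2))
    rw [htele, nsmul_eq_mul] at hcard
    nlinarith [mul_le_mul_of_nonneg_right hN (hg_nonneg N)]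
  have hhalf : Tendsto (fun N : ℕ => N / 2) atTop atTop :=
    Nat.tendsto_div_const_atTop two_ne_zero
  have hupper : Tendsto (fun N : ℕ => 2 * (f (N / 2) - f N)) atTop (𝓝 0) := by
    simpa using ((hlim.comp hhalf).sub hlim).const_mul 2
  exact tendsto_of_tendsto_of_tendsto_of_le_of_le tendsto_const_nhds hupper
    (fun N => mul_nonneg N.cast_nonneg (hg_nonneg N)) hbound

lemma hasSum_mul_secondDiff (hf : ConvexNat f) (hlim : Tendsto f atTop (𝓝 0)) :
    HasSum (fun n : ℕ => ((n : ℝ) + 1) * secondDiff f n) (f 0) := by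
  have h := (tendsto_const_nhds (x := f 0)).sub hlim |>.sub (hf.tendsto_mul_sub_succ hlim)
  rw [sub_zero, sub_zero] at h
  rw [hasSum_iff_tendsto_nat_of_nonneg fun n => mul_nonneg (by positivity) (hf.secondDiff_nonneg n)]
  simpa only [sum_range_mul_secondDiff] using h

end ConvexNat

lemma tri_eq_mul_max (j i : ℕ) : Tri j i = 2 / (j * (j + 1)) * max ((j : ℝ) - i) 0 := by
  unfold Tri
  split_ifs with h
  · rw [max_eq_left (sub_nonneg.2 (by exact_mod_cast h.le))]
    ring
  · rw [max_eq_right (sub_nonpos.2 (by exact_mod_cast not_lt.1 h)), mul_zero]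

lemma convexNat_max_sub (a : ℝ) : ConvexNat fun i => max (a - i) 0 := by
  intro i
  push_cast
  simp only [max_def]
  split_ifs <;> linarith

lemma convexNat_tri (j : ℕ) : ConvexNat (Tri j) := by
  simpa only [← tri_eq_mul_max] using
    (convexNat_max_sub j).const_mul (c := 2 / (j * (j + 1))) (by positivity)

lemma triWeight_nonneg {f : ℕ → ℝ} (hf : ConvexNat f) : ∀ j, 0 ≤ triWeight f j
  | 0 => le_rfl
  | k + 1 => mul_nonneg (by positivity) (hf k)

lemma triWeight_mul_tri_of_le {f : ℕ → ℝ} {i j : ℕ} (hj : j ≤ i) : triWeight f j * Tri j i = 0 := by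
  simp [Tri, not_lt.2 hj]

lemma triWeight_mul_tri (f : ℕ → ℝ) (i n : ℕ) :
    triWeight f (i + n + 1) * Tri (i + n + 1) i = ((n : ℝ) + 1) * secondDiff f (i + n) := by
  simp only [triWeight, Tri, if_pos (by omega : i < i + n + 1)]
  push_cast
  field_simp
  ring

lemma hasSum_triWeight_mul_tri {f : ℕ → ℝ} (hf : ConvexNat f) (hlim : Tendsto f atTop (𝓝 0))
    (i : ℕ) : HasSum (fun j => triWeight f j * Tri j i) (f i) := by
  have hlim_shift : Tendsto (fun n => f (i + n)) atTop (𝓝 0) :=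
    hlim.comp (tendsto_atTop_mono (Nat.le_add_left · i) tendsto_id)
  have hshift := (hf.comp_add_left i).hasSum_mul_secondDiff hlim_shift
  have hzero : ∑ j ∈ range (i + 1), triWeight f j * Tri j i = 0 :=
    sum_eq_zero fun j hj => triWeight_mul_tri_of_le (Nat.lt_succ_iff.1 (mem_range.1 hj))
  have hterms : (fun n : ℕ => triWeight f (n + (i + 1)) * Tri (n + (i + 1)) i)
      = fun n : ℕ => ((n : ℝ) + 1) * secondDiff (fun m => f (i + m)) n := by
    ext n
    rw [show n + (i + 1) = i + n + 1 by omega, triWeight_mul_tri]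
    rfl
  have h :=
    (hasSum_nat_add_iff (f := fun j => triWeight f j * Tri j i) (i + 1)).1 (hterms ▸ hshift)
  rwa [hzero, add_zero] at h

/-- Theorem 4 (1): a nonnegative `f` vanishing at infinity belongs to `𝒦` iff it is
a (possibly infinite) mixture `f(i) = ∑_{j≥i+1} π_j T_j(i)` with nonnegative weights.
(Note `T_j(i) = 0` for `j ≤ i`, so the sum over all `j` equals the sum over `j ≥ i+1`.) -/
theorem stmt_8 (f : ℕ → ℝ) (hnn : ∀ i, 0 ≤ f i)
    (hlim : Filter.Tendsto f Filter.atTop (nhds 0)) :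
    MemK f ↔
      ∃ π : ℕ → ℝ, (∀ j, 0 ≤ π j) ∧
        ∀ i : ℕ, Summable (fun j => π j * Tri j i) ∧ f i = ∑' j : ℕ, π j * Tri j i := by
  constructor
  · rintro ⟨hf, -, -⟩
    refine ⟨triWeight f, triWeight_nonneg hf, fun i => ?_⟩
    have h := hasSum_triWeight_mul_tri hf hlim i
    exact ⟨h.summable, h.tsum_eq.symm⟩
  · rintro ⟨π, hπ_nonneg, hπ⟩
    have hf : f = fun i => ∑' j, π j * Tri j i := funext fun i => (hπ i).2
    refine ⟨?_, hnn, hlim⟩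
    rw [hf]
    exact ConvexNat.tsum (fun j => (convexNat_tri j).const_mul (hπ_nonneg j)) fun i => (hπ i).1
end
end
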